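/- Let G ∈ 𝒜₁ with γ(G) = k, and suppose G has minimum restraint r+1 realized by an (r, r+1)-restraining set. Then for every graph H, (γ(G)+1)·γ(H) ≤ ((r+1)/r)·γ(G □ H). -/

import Mathlib

open Finset

/-- `S` dominates `T`: every vertex of `T` is in the closed neighborhood of `S`. -/
def Dominates {V : Type*} (G : SimpleGraph V) (S T : Set V) : Prop :=
  ∀ t ∈ T, ∃ s ∈ S, s = t ∨ G.Adj s t

/-- The domination number of a finite graph. -/
noncomputable def domNum {V : Type*} [Fintype V] (G : SimpleGraph V) : ℕ :=
  sInf {n | ∃ D : Finset V, D.card = n ∧ Dominates G ↑D Set.univ}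

/-- A partition of the vertex set of `G` into `m` cliques. -/
structure CliquePartition {V : Type*} (G : SimpleGraph V) (m : ℕ) where
  parts : Fin m → Finset V
  disj : ∀ i j, i ≠ j → Disjoint (parts i) (parts j)
  cover : ∀ v, ∃ i, v ∈ parts i
  clique : ∀ i, G.IsClique ↑(parts i)

/-- The clique covering number: minimum number of cliques partitioning `V(G)`. -/
noncomputable def cliqueCoverNum {V : Type*} [Fintype V] (G : SimpleGraph V) : ℕ :=
  sInf {m | Nonempty (CliquePartition G m)}

/-- The class `𝒟ₙ`: `θ(G) = γ(G) + n` and `G` is not a spanning subgraph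
(with equal domination number) of a graph in `𝒟ₘ` for `m < n`. -/
def InD {V : Type*} [Fintype V] (n : ℕ) (G : SimpleGraph V) : Prop :=
  cliqueCoverNum G = domNum G + n ∧
    ∀ m : ℕ, m < n → ∀ H : SimpleGraph V, G ≤ H → domNum G = domNum H → ¬ InD m H
termination_by n

/-- The class `𝒜ₙ`: spanning subgraphs (with equal domination number) of graphs in `𝒟ₙ`. -/
def InA {V : Type*} [Fintype V] (n : ℕ) (G : SimpleGraph V) : Prop :=
  ∃ H : SimpleGraph V, G ≤ H ∧ domNum G = domNum H ∧ InD n H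


/-- `S` is restraining with avoided-and-dominated cliques indexed by `L` and met
cliques indexed by `T` (so `S` is `(|S|, |L|+|T|)`-restraining; its restraint is
`|L| + |T|` and its excess `|L| + |T| − |S|`). -/
def IsRestrainingOn {V : Type*} [DecidableEq V] {G : SimpleGraph V} {m : ℕ}
    (P : CliquePartition G m) (S : Finset V) (L T : Finset (Fin m)) : Prop :=
  Disjoint L T ∧
  (∀ i ∈ L, Disjoint S (P.parts i)) ∧
  Dominates G ↑S ↑(L.biUnion P.parts) ∧
  (S ⊆ T.biUnion P.parts) ∧
  (∀ i ∈ T, (P.parts i ∩ S).Nonempty)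

/-! Fix a minimum dominating set `D` of `G □ H` and the partition `P` of `G'` into `γ(G) + 1`
cliques. For each `h`, the layer `S_h = {g | (g, h) ∈ D}` is restraining: it meets the cliques
`T_h`, and it dominates (through `G ≤ G'`) the cliques `L_h` whose product with `N_H[h]` misses
`D`. As `P` has only `γ(G') + 1` cliques, every restraining set has excess at most one, and by
minimality of the restraint an excess-one set has at least `r` vertices, so
`r (|L_h| + |T_h|) ≤ (r + 1) |S_h|`. Conversely, for each clique `i` the `h` at which `i` is met
or avoided dominate `H`, so summing over the cliques gives
`(γ(G) + 1) γ(H) ≤ ∑_h (|L_h| + |T_h|)`. -/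

section Domination

variable {V : Type*} {G : SimpleGraph V}

theorem Dominates.mono {S S' T T' : Set V} (h : Dominates G S T) (hS : S ⊆ S') (hT : T' ⊆ T) :
    Dominates G S' T' := fun t ht =>
  let ⟨s, hs, hst⟩ := h t (hT ht)
  ⟨s, hS hs, hst⟩

theorem SimpleGraph.IsClique.dominates_of_mem {S T : Set V} {v : V} (hT : G.IsClique T)
    (hvS : v ∈ S) (hvT : v ∈ T) : Dominates G S T := fun t ht =>
  ⟨v, hvS, (eq_or_ne v t).imp_right fun hne => hT hvT ht hne⟩

theorem SimpleGraph.IsClique.exists_dominates_card_le_one {T : Set V} (hT : G.IsClique T) :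
    ∃ R : Finset V, R.card ≤ 1 ∧ Dominates G ↑R T := by
  rcases T.eq_empty_or_nonempty with rfl | ⟨v, hv⟩
  · exact ⟨∅, zero_le_one, fun _ ht => ht.elim⟩
  · exact ⟨{v}, (Finset.card_singleton v).le, hT.dominates_of_mem (Finset.mem_coe.2 (Finset.mem_singleton_self v)) hv⟩

theorem domNum_le_card [Fintype V] {D : Finset V} (hD : Dominates G ↑D Set.univ) :
    domNum G ≤ D.card :=
  Nat.sInf_le ⟨D, rfl, hD⟩

theorem exists_dominates_card_eq_domNum [Fintype V] (G : SimpleGraph V) :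
    ∃ D : Finset V, D.card = domNum G ∧ Dominates G ↑D Set.univ :=
  Nat.sInf_mem (s := {n | ∃ D : Finset V, D.card = n ∧ Dominates G ↑D Set.univ})
    ⟨_, Finset.univ, rfl, fun t _ => ⟨t, Finset.mem_coe.2 (Finset.mem_univ t), Or.inl rfl⟩⟩

end Domination

namespace CliquePartition

variable {V : Type*} {G : SimpleGraph V} {m : ℕ} (P : CliquePartition G m)

theorem dominates_univ {S : Set V} (hS : ∀ i, Dominates G S ↑(P.parts i)) :
    Dominates G S Set.univ := fun v _ =>
  let ⟨i, hi⟩ := P.cover v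
  hS i v hi

theorem exists_dominates_parts [DecidableEq V] (I : Finset (Fin m)) :
    ∃ R : Finset V, R.card ≤ I.card ∧ ∀ i ∈ I, Dominates G ↑R ↑(P.parts i) := by
  choose R hRcard hR using fun i => (P.clique i).exists_dominates_card_le_one
  refine ⟨I.biUnion R, ?_, fun i hi => (hR i).mono (Finset.coe_subset.2 (Finset.subset_biUnion_of_mem R hi)) le_rfl⟩
  calc (I.biUnion R).card ≤ ∑ i ∈ I, (R i).card := Finset.card_biUnion_le
    _ ≤ ∑ _i ∈ I, 1 := Finset.sum_le_sum fun i _ => hRcard i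
    _ = I.card := (Finset.card_eq_sum_ones I).symm

end CliquePartition

namespace IsRestrainingOn

variable {V : Type*} [DecidableEq V] {G : SimpleGraph V} {m : ℕ}
  {P : CliquePartition G m} {S : Finset V} {L T : Finset (Fin m)}

theorem dominates_part (h : IsRestrainingOn P S L T) {i : Fin m} (hi : i ∈ L ∪ T) :
    Dominates G ↑S ↑(P.parts i) := by
  obtain ⟨-, -, hLdom, -, hTmeet⟩ := h
  rcases Finset.mem_union.1 hi with hiL | hiT
  · exact hLdom.mono le_rfl (Finset.coe_subset.2 (Finset.subset_biUnion_of_mem P.parts hiL))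
  · obtain ⟨v, hv⟩ := hTmeet i hiT
    exact (P.clique i).dominates_of_mem (Finset.mem_inter.1 hv).2 (Finset.mem_inter.1 hv).1

/-- Completing `S` by one vertex from each clique outside `L ∪ T` gives a dominating set. -/
theorem domNum_add_card_le [Fintype V] (h : IsRestrainingOn P S L T) :
    domNum G + (L.card + T.card) ≤ S.card + m := by
  obtain ⟨R, hRcard, hR⟩ := P.exists_dominates_parts (L ∪ T)ᶜ
  have hdom : Dominates G ↑(S ∪ R) Set.univ := P.dominates_univ fun i => by
    by_cases hi : i ∈ L ∪ T
    · exact (h.dominates_part hi).mono (Finset.coe_subset.2 Finset.subset_union_left) le_rfl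
    · exact (hR i (Finset.mem_compl.2 hi)).mono
        (Finset.coe_subset.2 Finset.subset_union_right) le_rfl
  have hLT : (L ∪ T).card = L.card + T.card := Finset.card_union_of_disjoint h.1
  have hcompl : (L ∪ T)ᶜ.card + (L ∪ T).card = m := by
    rw [Finset.card_compl_add_card, Fintype.card_fin]
  have := domNum_le_card hdom
  have := Finset.card_union_le S R
  omega

theorem mul_card_le_succ_mul_card [Fintype V] {r : ℕ} (P : CliquePartition G (domNum G + 1))
    {L T : Finset (Fin (domNum G + 1))}
    (hmin : ∀ (S' : Finset V) (L' T' : Finset (Fin (domNum G + 1))),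
      IsRestrainingOn P S' L' T' → L'.card + T'.card = S'.card + 1 → r + 1 ≤ L'.card + T'.card)
    (h : IsRestrainingOn P S L T) :
    r * (L.card + T.card) ≤ (r + 1) * S.card := by
  have hexcess : L.card + T.card ≤ S.card + 1 := by
    have := h.domNum_add_card_le
    omega
  rcases hexcess.lt_or_eq with hlt | heq
  · calc r * (L.card + T.card) ≤ r * S.card := Nat.mul_le_mul_left r (Nat.le_of_lt_succ hlt)
      _ ≤ (r + 1) * S.card := Nat.mul_le_mul_right _ r.le_succ
  · have hrS : r ≤ S.card := by
      have := hmin S L T h heq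
      omega
    rw [heq]
    nlinarith

end IsRestrainingOn

theorem Finset.sum_card_filter_mem_eq_sum_card {ι κ : Type*} [Fintype ι] [Fintype κ]
    [DecidableEq ι] (s : κ → Finset ι) :
    ∑ i, (Finset.univ.filter fun k => i ∈ s k).card = ∑ k, (s k).card := by
  simp only [Finset.card_filter]
  rw [Finset.sum_comm]
  simp

namespace BoxProdFiber

open scoped Classical

variable {V W : Type*} [Fintype V] [DecidableEq V] {G' : SimpleGraph V} {m : ℕ}
  (P : CliquePartition G' m) (H : SimpleGraph W) (D : Finset (V × W))

noncomputable def fiber (h : W) : Finset V := Finset.univ.filter fun g => (g, h) ∈ D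

noncomputable def metCliques (h : W) : Finset (Fin m) :=
  Finset.univ.filter fun i => (P.parts i ∩ fiber D h).Nonempty

noncomputable def avoidedCliques (h : W) : Finset (Fin m) :=
  Finset.univ.filter fun i => ∀ h', (h' = h ∨ H.Adj h' h) → Disjoint (P.parts i) (fiber D h')

variable {P H D}

theorem mem_fiber {g : V} {h : W} : g ∈ fiber D h ↔ (g, h) ∈ D := by
  simp [fiber]

theorem card_eq_sum_card_fiber [Fintype W] : D.card = ∑ h, (fiber D h).card := by
  simp only [fiber, Finset.card_filter]
  rw [← Finset.sum_comm, ← Fintype.sum_prod_type', ← Finset.card_filter, Finset.filter_mem_eq_inter,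
    Finset.univ_inter]

theorem isRestrainingOn_fiber {G : SimpleGraph V} (hsub : G ≤ G')
    (hD : Dominates (G.boxProd H) ↑D Set.univ) (h : W) :
    IsRestrainingOn P (fiber D h) (avoidedCliques P H D h) (metCliques P D h) := by
  have hmet {i} : i ∈ metCliques P D h ↔ (P.parts i ∩ fiber D h).Nonempty := by
    simp [metCliques]
  have havoided {i} : i ∈ avoidedCliques P H D h ↔
      ∀ h', (h' = h ∨ H.Adj h' h) → Disjoint (P.parts i) (fiber D h') := by
    simp [avoidedCliques]
  have hself {i} (hi : i ∈ avoidedCliques P H D h) : Disjoint (fiber D h) (P.parts i) :=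
    (havoided.1 hi h (Or.inl rfl)).symm
  refine ⟨?_, fun i hi => hself hi, ?_, ?_, fun i hi => hmet.1 hi⟩
  · rw [Finset.disjoint_left]
    intro i hiL hiT
    exact (Finset.disjoint_iff_inter_eq_empty.1 (hself hiL).symm ▸ hmet.1 hiT).ne_empty rfl
  · intro t ht
    obtain ⟨i, hiL, hti⟩ := Finset.mem_biUnion.1 ht
    have hnot {h'} (hh' : h' = h ∨ H.Adj h' h) : (t, h') ∉ D := fun htD =>
      Finset.disjoint_left.1 (havoided.1 hiL h' hh') hti (mem_fiber.2 htD)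
    obtain ⟨⟨g, h'⟩, hdD, heq | hadj⟩ := hD (t, h) (Set.mem_univ _)
    · obtain ⟨rfl, rfl⟩ := Prod.mk.inj heq
      exact absurd hdD (hnot (Or.inl rfl))
    · rcases SimpleGraph.boxProd_adj.1 hadj with ⟨hGadj, rfl⟩ | ⟨hHadj, rfl⟩
      · exact ⟨g, mem_fiber.2 hdD, Or.inr (hsub hGadj)⟩
      · exact absurd hdD (hnot (Or.inr hHadj))
  · intro g hg
    obtain ⟨i, hi⟩ := P.cover g
    exact Finset.mem_biUnion.2 ⟨i, hmet.2 ⟨g, Finset.mem_inter.2 ⟨hi, hg⟩⟩, hi⟩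

theorem dominates_met_union_avoided [Fintype W] (i : Fin m) :
    Dominates H ↑(Finset.univ.filter (fun h => i ∈ metCliques P D h) ∪
      Finset.univ.filter (fun h => i ∈ avoidedCliques P H D h)) Set.univ := by
  intro h _
  by_cases hi : i ∈ avoidedCliques P H D h
  · exact ⟨h, by simp [hi], Or.inl rfl⟩
  · simp only [avoidedCliques, Finset.mem_filter, Finset.mem_univ, true_and, not_forall] at hi
    obtain ⟨h', hh', hmeet⟩ := hi
    refine ⟨h', ?_, hh'⟩
    simpa [metCliques, Finset.not_disjoint_iff_nonempty_inter] using Or.inl hmeet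

theorem mul_domNum_le_sum_card [Fintype W] :
    m * domNum H ≤ ∑ h, ((avoidedCliques P H D h).card + (metCliques P D h).card) :=
  calc m * domNum H = ∑ _i : Fin m, domNum H := by simp
    _ ≤ ∑ i, ((Finset.univ.filter fun h => i ∈ metCliques P D h).card +
        (Finset.univ.filter fun h => i ∈ avoidedCliques P H D h).card) :=
      Finset.sum_le_sum fun i _ =>
        (domNum_le_card (dominates_met_union_avoided i)).trans (Finset.card_union_le _ _)
    _ = ∑ h, ((avoidedCliques P H D h).card + (metCliques P D h).card) := by
      rw [Finset.sum_add_distrib, Finset.sum_card_filter_mem_eq_sum_card,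
        Finset.sum_card_filter_mem_eq_sum_card, ← Finset.sum_add_distrib]
      simp only [add_comm]

end BoxProdFiber

open BoxProdFiber

theorem stmt17_general {V : Type*} [Fintype V] [DecidableEq V] (r : ℕ) (hr : 1 ≤ r)
    (G : SimpleGraph V)
    (G' : SimpleGraph V) (hsub : G ≤ G') (hγ : domNum G = domNum G')
    (P : CliquePartition G' (domNum G' + 1))
    (hmin : ∀ (S' : Finset V) (L' T' : Finset (Fin (domNum G' + 1))),
      IsRestrainingOn P S' L' T' → L'.card + T'.card = S'.card + 1 →
      r + 1 ≤ L'.card + T'.card) :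
    ∀ (W : Type) [Fintype W] (H : SimpleGraph W),
      ((domNum G + 1) * domNum H : ℝ) ≤
        ((r + 1 : ℝ) / r) * domNum (G.boxProd H) := by
  intro W _ H
  obtain ⟨D, hDcard, hD⟩ := exists_dominates_card_eq_domNum (G.boxProd H)
  have key : r * ((domNum G + 1) * domNum H) ≤ (r + 1) * domNum (G.boxProd H) :=
    calc r * ((domNum G + 1) * domNum H)
        ≤ r * ∑ h, ((avoidedCliques P H D h).card + (metCliques P D h).card) := by
          rw [hγ]
          exact Nat.mul_le_mul_left r mul_domNum_le_sum_card
      _ ≤ ∑ h, (r + 1) * (fiber D h).card := by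
          rw [Finset.mul_sum]
          exact Finset.sum_le_sum fun h _ =>
            (isRestrainingOn_fiber hsub hD h).mul_card_le_succ_mul_card P hmin
      _ = (r + 1) * domNum (G.boxProd H) := by
          rw [← Finset.mul_sum, ← card_eq_sum_card_fiber, hDcard]
  have hr' : (0 : ℝ) < r := Nat.cast_pos.2 hr
  rw [div_mul_eq_mul_div, le_div_iff₀ hr', mul_comm]
  exact_mod_cast key

/-- Overcount bound: if `G ∈ 𝒜₁` has minimum restraint `r + 1`, realized by an
`(r, r+1)`-restraining set, then for every graph `H`,
`(γ(G)+1)·γ(H) ≤ ((r+1)/r)·γ(G □ H)`. -/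
theorem stmt17 {V : Type*} [Fintype V] [DecidableEq V] (r : ℕ) (hr : 1 ≤ r)
    (G : SimpleGraph V) (hG : InA 1 G)
    (G' : SimpleGraph V) (hsub : G ≤ G') (hγ : domNum G = domNum G') (hG' : InD 1 G')
    (P : CliquePartition G' (domNum G' + 1))
    (S : Finset V) (L T : Finset (Fin (domNum G' + 1)))
    (hS : IsRestrainingOn P S L T) (hScard : S.card = r)
    (hrestraint : L.card + T.card = r + 1)
    (hmin : ∀ (S' : Finset V) (L' T' : Finset (Fin (domNum G' + 1))),
      IsRestrainingOn P S' L' T' → L'.card + T'.card = S'.card + 1 →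
      r + 1 ≤ L'.card + T'.card) :
    ∀ (W : Type) [Fintype W] (H : SimpleGraph W),
      ((domNum G + 1) * domNum H : ℝ) ≤
        ((r + 1 : ℝ) / r) * domNum (G.boxProd H) :=
  stmt17_general r hr G G' hsub hγ P hmin
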